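/- If < is an irreflexive, transitive, modular, and well-founded relation on a finite (or arbitrary well-founded) set Δ, and rank k(x) is defined as the length of the longest <-chain descending from x (equivalently, defined by well-founded recursion as the supremum over y < x of k(y)+1), then for all x, y: x < y if and only if k(x) < k(y). -/
import Mathlib


open Finset in
/-- For an irreflexive, transitive, modular, well-founded relation on a finite set,
with rank `k x = 0` if `x` is minimal and otherwise `1 + max {k y : y < x}`
(equivalently `k x = sup {k y + 1 : y < x}`), we have `x < y ↔ k x < k y`. -/
theorem rank_characterizes_lt {Δ : Type*} [Fintype Δ] (lt : Δ → Δ → Prop)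
    [DecidableRel lt]
    (hirr : ∀ x, ¬ lt x x)
    (htrans : ∀ x y z, lt x y → lt y z → lt x z)
    (hmod : ∀ x y z, lt x y → lt x z ∨ lt z y)
    (hwf : WellFounded lt)
    (k : Δ → ℕ)
    (hk : ∀ x, k x = (Finset.univ.filter (fun y => lt y x)).sup (fun y => k y + 1)) :
    ∀ x y, lt x y ↔ k x < k y := by
  have fwd : ∀ x y, lt x y → k x < k y := by
    intro x y h
    rw [hk y]
    exact lt_of_lt_of_le (Nat.lt_succ_self _)
      (Finset.le_sup (f := fun z => k z + 1) (by simpa using h))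
  have bwd : ∀ n x y, k y = n → k x < k y → lt x y := by
    intro n
    induction n using Nat.strong_induction_on with
    | _ n ih =>
      intro x y hn hlt
      have hne : (Finset.univ.filter (fun z => lt z y)).Nonempty := by
        by_contra hemp
        rw [Finset.not_nonempty_iff_eq_empty] at hemp
        rw [hk y, hemp] at hlt
        simp at hlt
      obtain ⟨z, hz, hzsup⟩ := Finset.exists_mem_eq_sup _ hne (fun z => k z + 1)
      simp only [Finset.mem_filter] at hz
      have hzy : lt z y := hz.2
      have hky : k y = k z + 1 := by rw [hk y, hzsup]
      have hle : k x ≤ k z := by omega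
      rcases lt_or_eq_of_le hle with hlt' | heq
      · have : lt x z := ih (k z) (by omega) x z rfl (by omega)
        exact htrans x z y this hzy
      · rcases hmod z y x hzy with h | h
        · exact absurd (fwd z x h) (by omega)
        · exact h
  intro x y
  exact ⟨fwd x y, fun h => bwd (k y) x y rfl h⟩
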